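/- arXiv:2603.16962 — 5 statements merged into one kernel-verified Lean document; each statement's English description precedes it below -/
import Mathlib

section
/- Let n ∈ ℕ and let J ∈ M_{2n} be written in block form J = Σ_{i,j=1}^n E_{ij} ⊗ J_{ij} with 2×2 blocks J_{ij}. Assume J is doubly nonnegative (positive semidefinite with all entries nonnegative) and that tr(J_{ij}) = δ_{ij} for all 1 ≤ i,j ≤ n. Then J is completely positive, i.e., J = Σ_{t=1}^s x_t x_tᵀ for some entrywise nonnegative vectors x_t ∈ ℝ^{2n}. -/
/-!
The off-diagonal blocks of `J` have zero diagonal (their traces vanish and their entries are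
nonnegative), so grouping the first and the second coordinates of the blocks turns `J` into
`[[diag a, B], [Bᵀ, diag c]]` with `B ≥ 0`. Positive semidefiniteness makes the Schur complement
`M = diag c - Bᵀ diag(a)⁻¹ B` a positive semidefinite matrix with nonpositive off-diagonal
entries, and such a matrix admits a positive vector `w` with `M w ≥ 0`. With `b = B w`, the
numbers `s_ij = √(B_ij a_i w_j / b_i)` and `t_ij = √(B_ij b_i / (a_i w_j))` satisfy
`s_ij t_ij = B_ij`, `∑_j s_ij² ≤ a_i` and `∑_i t_ij² ≤ c_j`. Hence `J` is the sum of the rank-one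
matrices of the nonnegative vectors `s_ij e_i + t_ij f_j` (`e`, `f` the unit vectors of the two
groups of coordinates) and of a nonnegative diagonal matrix.
-/

open Matrix

def IsCPMatrix {ι : Type*} [Fintype ι] (A : Matrix ι ι ℝ) : Prop :=
  ∃ (s : ℕ) (x : Fin s → ι → ℝ), (∀ t i, 0 ≤ x t i) ∧
    A = ∑ t, Matrix.vecMulVec (x t) (x t)

theorem nonneg_of_forall_mul_add_mul_sq_nonneg {b c : ℝ}
    (h : ∀ t ∈ Set.Ioc (0 : ℝ) 1, 0 ≤ b * t + c * t ^ 2) : 0 ≤ b := by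
  by_contra! hb
  set t := min 1 (-b / (|c| + 1))
  have ht : 0 < t := lt_min one_pos (div_pos (neg_pos.2 hb) (by positivity))
  have hct : c * t < -b := calc
    c * t ≤ |c| * t := mul_le_mul_of_nonneg_right (le_abs_self c) ht.le
    _ < (|c| + 1) * t := by linarith
    _ ≤ (|c| + 1) * (-b / (|c| + 1)) := by gcongr; exact min_le_right _ _
    _ = -b := by field_simp
  have := h t ⟨ht, min_le_left _ _⟩
  nlinarith

theorem Real.sqrt_mul_mul_sqrt_div {x r : ℝ} (hx : 0 ≤ x) (hr : 0 ≤ r) (hxr : r = 0 → x = 0) :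
    √(x * r) * √(x / r) = x := by
  rcases hr.eq_or_lt with h | h
  · simp [hxr h.symm]
  · rw [← Real.sqrt_mul (mul_nonneg hx hr), show x * r * (x / r) = x * x by field_simp,
      Real.sqrt_mul_self hx]

variable {ι κ : Type*}

theorem Matrix.PosSemidef.isSymm {A : Matrix ι ι ℝ} (hA : A.PosSemidef) : A.IsSymm :=
  IsSymm.ext fun i j => by simpa using hA.1.apply i j

section Fintype

variable [Fintype ι]

def simplexFace (s : Finset ι) : Set (ι → ℝ) :=
  stdSimplex ℝ ι ∩ (↑s : Set ι)ᶜ.pi fun _ => {0}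

theorem isCompact_simplexFace (s : Finset ι) : IsCompact (simplexFace s) :=
  (isCompact_stdSimplex ℝ ι).inter_right (isClosed_set_pi fun _ _ => isClosed_singleton)

theorem convex_simplexFace (s : Finset ι) : Convex ℝ (simplexFace s) :=
  (convex_stdSimplex ℝ ι).inter (convex_pi fun _ _ => convex_singleton 0)

theorem single_mem_simplexFace [DecidableEq ι] {s : Finset ι} {i : ι} (hi : i ∈ s) :
    Pi.single i 1 ∈ simplexFace s :=
  ⟨single_mem_stdSimplex ℝ i, fun k hk => Pi.single_eq_of_ne (by rintro rfl; exact hk hi) 1⟩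

theorem Matrix.IsSymm.dotProduct_mulVec_add_smul {A : Matrix ι ι ℝ} (hA : A.IsSymm)
    (u d : ι → ℝ) (t : ℝ) :
    (u + t • d) ⬝ᵥ A *ᵥ (u + t • d) =
      u ⬝ᵥ A *ᵥ u + 2 * (d ⬝ᵥ A *ᵥ u) * t + (d ⬝ᵥ A *ᵥ d) * t ^ 2 := by
  have hswap : u ⬝ᵥ A *ᵥ d = d ⬝ᵥ A *ᵥ u := by
    rw [dotProduct_mulVec, ← mulVec_transpose, hA.eq, dotProduct_comm]
  simp only [mulVec_add, mulVec_smul, dotProduct_add, add_dotProduct, dotProduct_smul,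
    smul_dotProduct, smul_eq_mul, hswap]
  ring

-- `u` minimises the quadratic form on the face; these are its first-order conditions.
theorem exists_simplexFace_le_mulVec [DecidableEq ι] {A : Matrix ι ι ℝ} (hA : A.IsSymm)
    {s : Finset ι} (hs : s.Nonempty) :
    ∃ u ∈ simplexFace s, ∀ i ∈ s, u ⬝ᵥ A *ᵥ u ≤ (A *ᵥ u) i := by
  obtain ⟨u, hu, hmin⟩ := (isCompact_simplexFace s).exists_isMinOn
    (let ⟨_, hi⟩ := hs; ⟨_, single_mem_simplexFace hi⟩)
    (by fun_prop : Continuous fun v : ι → ℝ => v ⬝ᵥ A *ᵥ v).continuousOn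
  refine ⟨u, hu, fun i hi => ?_⟩
  set d := Pi.single i 1 - u
  have hslope : 0 ≤ 2 * (d ⬝ᵥ A *ᵥ u) := by
    refine nonneg_of_forall_mul_add_mul_sq_nonneg (c := d ⬝ᵥ A *ᵥ d) fun t ht => ?_
    have := isMinOn_iff.mp hmin _ ((convex_simplexFace s).add_smul_sub_mem hu
      (single_mem_simplexFace hi) (Set.Ioc_subset_Icc_self ht))
    rw [hA.dotProduct_mulVec_add_smul] at this
    linarith
  rw [sub_dotProduct, single_one_dotProduct] at hslope
  linarith

theorem mul_eq_zero_of_mulVec_nonneg {A : Matrix ι ι ℝ} (hZ : ∀ i j, i ≠ j → A i j ≤ 0)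
    {u : ι → ℝ} (hu : 0 ≤ u) {k : ι} (hk : u k = 0) (hAu : 0 ≤ (A *ᵥ u) k) (j : ι) :
    A k j * u j = 0 := by
  have hterm : ∀ l ∈ Finset.univ, A k l * u l ≤ 0 := fun l _ => by
    rcases eq_or_ne k l with rfl | hkl
    · simp [hk]
    · exact mul_nonpos_of_nonpos_of_nonneg (hZ k l hkl) (hu l)
  have hsum : (A *ᵥ u) k = 0 := le_antisymm (Finset.sum_nonpos hterm) hAu
  exact (Finset.sum_eq_zero_iff_of_nonpos hterm).mp hsum j (Finset.mem_univ j)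

-- Take `u` minimising the quadratic form on the face of `s`, so `A u ≥ 0` on `s`, and `v` for the
-- zero set `Z ⊂ s` of `u`. The sign pattern of `A` forces `A k j = 0` for `k ∈ Z` and `u j ≠ 0`,
-- so `u + v` works.
theorem Matrix.PosSemidef.exists_pos_on_mulVec_nonneg [DecidableEq ι] {A : Matrix ι ι ℝ}
    (hA : A.PosSemidef) (hZ : ∀ i j, i ≠ j → A i j ≤ 0) (s : Finset ι) :
    ∃ w : ι → ℝ, (∀ i ∈ s, 0 < w i) ∧ (∀ i ∉ s, w i = 0) ∧ ∀ i ∈ s, 0 ≤ (A *ᵥ w) i := by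
  induction s using Finset.strongInduction with
  | H s ih =>
  rcases s.eq_empty_or_nonempty with rfl | hs
  · exact ⟨0, by simp, by simp, by simp⟩
  obtain ⟨u, ⟨⟨hu0, hu1⟩, hus⟩, hmin⟩ := exists_simplexFace_le_mulVec hA.isSymm hs
  have hAu : ∀ i ∈ s, 0 ≤ (A *ᵥ u) i := fun i hi =>
    (by simpa using hA.dotProduct_mulVec_nonneg u : 0 ≤ u ⬝ᵥ A *ᵥ u).trans (hmin i hi)
  set Z := s.filter (u · = 0)
  have hZs : Z ⊂ s := Finset.filter_ssubset.mpr <| by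
    by_contra! h
    have : ∑ i, u i = 0 := Finset.sum_eq_zero fun i _ =>
      if hi : i ∈ s then h i hi else hus i hi
    linarith
  obtain ⟨v, hvZ, hvZ', hAv⟩ := ih Z hZs
  have hdecouple : ∀ i, u i ≠ 0 → (A *ᵥ v) i = 0 := fun i hi =>
    Finset.sum_eq_zero fun k _ => by
      by_cases hk : k ∈ Z
      · obtain ⟨hks, hk0⟩ := Finset.mem_filter.mp hk
        have := mul_eq_zero_of_mulVec_nonneg hZ hu0 hk0 (hAu k hks) i
        show A i k * v k = 0
        rw [← hA.isSymm.apply, (mul_eq_zero.mp this).resolve_right hi, zero_mul]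
      · rw [hvZ' k hk, mul_zero]
  refine ⟨u + v, fun i hi => ?_, fun i hi => ?_, fun i hi => ?_⟩
  · by_cases hui : u i = 0
    · simpa [hui] using hvZ i (Finset.mem_filter.mpr ⟨hi, hui⟩)
    · rw [Pi.add_apply, hvZ' i fun h => hui (Finset.mem_filter.mp h).2, add_zero]
      exact (hu0 i).lt_of_ne' hui
  · rw [Pi.add_apply, Set.mem_singleton_iff.mp (hus i hi),
      hvZ' i fun h => hi (Finset.mem_filter.mp h).1, add_zero]
  · rw [mulVec_add, Pi.add_apply]
    by_cases hui : u i = 0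
    · exact add_nonneg (hAu i hi) (hAv i (Finset.mem_filter.mpr ⟨hi, hui⟩))
    · rw [hdecouple i hui, add_zero]
      exact hAu i hi

theorem Matrix.PosSemidef.exists_pos_mulVec_nonneg [DecidableEq ι] {A : Matrix ι ι ℝ}
    (hA : A.PosSemidef) (hZ : ∀ i j, i ≠ j → A i j ≤ 0) :
    ∃ w : ι → ℝ, (∀ i, 0 < w i) ∧ ∀ i, 0 ≤ (A *ᵥ w) i := by
  obtain ⟨w, hw, -, hAw⟩ := hA.exists_pos_on_mulVec_nonneg hZ Finset.univ
  exact ⟨w, fun i => hw i (Finset.mem_univ i), fun i => hAw i (Finset.mem_univ i)⟩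

theorem diagonal_sub_transpose_mul_mul_apply_nonpos [DecidableEq ι] [DecidableEq κ]
    {a : ι → ℝ} {c : κ → ℝ} {B : Matrix ι κ ℝ} (ha : 0 ≤ a) (hB : ∀ i j, 0 ≤ B i j)
    {j l : κ} (hjl : j ≠ l) : (diagonal c - Bᵀ * diagonal a⁻¹ * B) j l ≤ 0 := by
  rw [Matrix.sub_apply, diagonal_apply_ne _ hjl, zero_sub, neg_nonpos, mul_apply]
  simp only [mul_diagonal, transpose_apply, Pi.inv_apply]
  exact Finset.sum_nonneg fun i _ =>
    mul_nonneg (mul_nonneg (hB i j) (inv_nonneg.2 (ha i))) (hB i l)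

theorem diagonal_sub_transpose_mul_mul_mulVec_apply [Fintype κ] [DecidableEq ι] [DecidableEq κ]
    (a : ι → ℝ) (c : κ → ℝ) (B : Matrix ι κ ℝ) (w : κ → ℝ) (j : κ) :
    ((diagonal c - Bᵀ * diagonal a⁻¹ * B) *ᵥ w) j =
      c j * w j - ∑ i, B i j * (a i)⁻¹ * (B *ᵥ w) i := by
  rw [sub_mulVec, ← mulVec_mulVec, ← mulVec_mulVec, Pi.sub_apply, mulVec_diagonal]
  simp only [mulVec_transpose, vecMul, dotProduct, mulVec_diagonal, Pi.inv_apply]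
  congr 1
  exact Finset.sum_congr rfl fun i _ => by ring

theorem exists_hadamard_eq_of_posSemidef [Fintype κ] [DecidableEq ι] [DecidableEq κ]
    {a : ι → ℝ} {c : κ → ℝ} {B : Matrix ι κ ℝ}
    (ha : 0 ≤ a) (hB : ∀ i j, 0 ≤ B i j) (hB0 : ∀ i j, a i = 0 → B i j = 0)
    (hM : (diagonal c - Bᵀ * diagonal a⁻¹ * B).PosSemidef) :
    ∃ s t : Matrix ι κ ℝ, (∀ i j, 0 ≤ s i j) ∧ (∀ i j, 0 ≤ t i j) ∧ s ⊙ t = B ∧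
      (∀ i, ∑ j, s i j ^ 2 ≤ a i) ∧ ∀ j, ∑ i, t i j ^ 2 ≤ c j := by
  obtain ⟨w, hw, hMw⟩ := hM.exists_pos_mulVec_nonneg fun _ _ =>
    diagonal_sub_transpose_mul_mul_apply_nonpos ha hB
  set b := B *ᵥ w
  have hBw : ∀ i j, 0 ≤ B i j * w j := fun i j => mul_nonneg (hB i j) (hw j).le
  have hb : ∀ i, 0 ≤ b i := fun i => Finset.sum_nonneg fun j _ => hBw i j
  have hMw' (j : κ) : ∑ i, B i j * (a i)⁻¹ * b i ≤ c j * w j := by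
    linarith [hMw j, diagonal_sub_transpose_mul_mul_mulVec_apply a c B w j]
  set r : Matrix ι κ ℝ := fun i j => a i * w j / b i
  have hr : ∀ i j, 0 ≤ r i j := fun i j => div_nonneg (mul_nonneg (ha i) (hw j).le) (hb i)
  have hBr : ∀ i j, r i j = 0 → B i j = 0 := fun i j h => by
    rcases div_eq_zero_iff.mp h with h | h
    · exact hB0 i j ((mul_eq_zero.mp h).resolve_right (hw j).ne')
    · have := (Finset.sum_eq_zero_iff_of_nonneg fun k _ => hBw i k).mp h j (Finset.mem_univ j)
      exact (mul_eq_zero.mp this).resolve_right (hw j).ne'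
  refine ⟨fun i j => √(B i j * r i j), fun i j => √(B i j / r i j),
    fun _ _ => Real.sqrt_nonneg _, fun _ _ => Real.sqrt_nonneg _, ?_, fun i => ?_, fun j => ?_⟩
  · ext i j
    exact Real.sqrt_mul_mul_sqrt_div (hB i j) (hr i j) (hBr i j)
  · simp_rw [Real.sq_sqrt (mul_nonneg (hB _ _) (hr _ _))]
    calc ∑ j, B i j * r i j = a i * b i / b i := by
          simp only [r, b, mulVec, dotProduct, Finset.mul_sum, Finset.sum_div]
          exact Finset.sum_congr rfl fun j _ => by ring
      _ ≤ a i := by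
          rcases (hb i).eq_or_lt with h | h
          · simpa [← h] using ha i
          · rw [mul_div_cancel_right₀ _ h.ne']
  · simp_rw [Real.sq_sqrt (div_nonneg (hB _ _) (hr _ _))]
    calc ∑ i, B i j / r i j = (∑ i, B i j * (a i)⁻¹ * b i) / w j := by
          simp only [r, Finset.sum_div]
          exact Finset.sum_congr rfl fun i _ => by field_simp
      _ ≤ c j := by
          rw [div_le_iff₀ (hw j)]
          exact hMw' j

theorem Matrix.PosSemidef.apply_eq_zero_of_diag_eq_zero [DecidableEq ι] {A : Matrix ι ι ℝ}
    (hA : A.PosSemidef) {i : ι} (hi : A i i = 0) (j : ι) : A j i = 0 := by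
  have := (hA.dotProduct_mulVec_zero_iff (Pi.single i 1)).mp (by simp [hi])
  simpa using congrFun this j

-- Congruence by `fromRows (-(diagonal a⁻¹ * B)) 1`; the identity `a⁻¹ * a * a⁻¹ = a⁻¹` it needs
-- also holds where `a` vanishes, because `0⁻¹ = 0`.
theorem Matrix.PosSemidef.schur_fromBlocks_diagonal [Fintype κ] [DecidableEq ι] [DecidableEq κ]
    {a : ι → ℝ} {c : κ → ℝ} {B : Matrix ι κ ℝ}
    (hP : (fromBlocks (diagonal a) B Bᵀ (diagonal c)).PosSemidef) :
    (diagonal c - Bᵀ * diagonal a⁻¹ * B).PosSemidef := by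
  have hD : diagonal a⁻¹ * (diagonal a * (diagonal a⁻¹ * B)) = diagonal a⁻¹ * B := by
    rw [← Matrix.mul_assoc, ← Matrix.mul_assoc, diagonal_mul_diagonal, diagonal_mul_diagonal]
    congr 2
    funext i
    simpa using mul_inv_mul_cancel (a i)⁻¹
  convert hP.conjTranspose_mul_mul_same (fromRows (-(diagonal a⁻¹ * B)) 1) using 1
  rw [conjTranspose_eq_transpose_of_trivial, transpose_fromRows, Matrix.mul_assoc (fromCols _ _),
    fromBlocks_mul_fromRows, fromCols_mul_fromRows]
  simp only [transpose_neg, transpose_mul, (isSymm_diagonal _).eq, transpose_one, Matrix.one_mul,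
    Matrix.mul_one, Matrix.mul_add, Matrix.mul_neg, Matrix.neg_mul, neg_neg, Matrix.mul_assoc, hD]
  abel

theorem isCPMatrix_sum_vecMulVec {τ : Type*} [Fintype τ] (x : τ → ι → ℝ)
    (hx : ∀ t i, 0 ≤ x t i) : IsCPMatrix (∑ t, vecMulVec (x t) (x t)) :=
  ⟨Fintype.card τ, fun t => x ((Fintype.equivFin τ).symm t), fun _ _ => hx _ _,
    (Equiv.sum_comp (Fintype.equivFin τ).symm fun t => vecMulVec (x t) (x t)).symm⟩

theorem IsCPMatrix.add {A A' : Matrix ι ι ℝ} (hA : IsCPMatrix A) (hA' : IsCPMatrix A') :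
    IsCPMatrix (A + A') := by
  obtain ⟨s, x, hx, rfl⟩ := hA
  obtain ⟨s', x', hx', rfl⟩ := hA'
  simpa [Fintype.sum_sum_type] using
    isCPMatrix_sum_vecMulVec (Sum.elim x x') (by rintro (t | t) i <;> simp [hx, hx'])

theorem IsCPMatrix.submatrix [Fintype κ] {A : Matrix ι ι ℝ} (hA : IsCPMatrix A) (f : κ → ι) :
    IsCPMatrix (A.submatrix f f) := by
  obtain ⟨s, x, hx, rfl⟩ := hA
  refine ⟨s, fun t => x t ∘ f, fun t k => hx t (f k), ?_⟩
  ext k l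
  simp [Matrix.sum_apply, vecMulVec_apply]

theorem isCPMatrix_diagonal [DecidableEq ι] {d : ι → ℝ} (hd : 0 ≤ d) :
    IsCPMatrix (diagonal d) := by
  have hsum : diagonal d = ∑ k, vecMulVec (Pi.single k √(d k)) (Pi.single k √(d k)) := by
    ext i j
    simp only [diagonal_apply, Matrix.sum_apply, vecMulVec_apply, Pi.single_apply, mul_ite,
      ite_mul, zero_mul, mul_zero, Finset.sum_ite_eq, Finset.mem_univ, ↓reduceIte]
    split_ifs with h
    · rw [h, Real.mul_self_sqrt (hd j)]
    · rfl
  rw [hsum]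
  exact isCPMatrix_sum_vecMulVec _ fun k =>
    (Pi.single_nonneg (α := fun _ => ℝ)).2 (Real.sqrt_nonneg _)

theorem fromBlocks_diagonal_hadamard_eq_sum_vecMulVec_add_diagonal [Fintype κ]
    [DecidableEq ι] [DecidableEq κ] (a : ι → ℝ) (c : κ → ℝ) (s t : Matrix ι κ ℝ) :
    fromBlocks (diagonal a) (s ⊙ t) (s ⊙ t)ᵀ (diagonal c) =
      ∑ p : ι × κ, vecMulVec (Sum.elim (Pi.single p.1 (s p.1 p.2)) (Pi.single p.2 (t p.1 p.2)))
        (Sum.elim (Pi.single p.1 (s p.1 p.2)) (Pi.single p.2 (t p.1 p.2))) +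
      diagonal (Sum.elim (fun i => a i - ∑ j, s i j ^ 2) fun j => c j - ∑ i, t i j ^ 2) := by
  ext (i | j) (i' | j')
  all_goals
    simp only [fromBlocks_apply₁₁, fromBlocks_apply₁₂, fromBlocks_apply₂₁, fromBlocks_apply₂₂,
      Matrix.add_apply, Matrix.sum_apply, vecMulVec_apply, Sum.elim_inl, Sum.elim_inr,
      Pi.single_apply, diagonal_apply, Fintype.sum_prod_type, transpose_apply, hadamard_apply]
    split_ifs <;> simp_all [sq, mul_comm]

theorem isCPMatrix_fromBlocks_diagonal [Fintype κ] [DecidableEq ι] [DecidableEq κ]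
    {a : ι → ℝ} {c : κ → ℝ} {B : Matrix ι κ ℝ} (hB : ∀ i j, 0 ≤ B i j)
    (hP : (fromBlocks (diagonal a) B Bᵀ (diagonal c)).PosSemidef) :
    IsCPMatrix (fromBlocks (diagonal a) B Bᵀ (diagonal c)) := by
  have ha : 0 ≤ a := fun i => by simpa using hP.diag_nonneg (i := Sum.inl i)
  have hB0 : ∀ i j, a i = 0 → B i j = 0 := fun i j hi => by
    simpa using hP.apply_eq_zero_of_diag_eq_zero (i := Sum.inl i) (by simpa using hi) (Sum.inr j)
  obtain ⟨s, t, hs, ht, rfl, hrow, hcol⟩ :=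
    exists_hadamard_eq_of_posSemidef ha hB hB0 hP.schur_fromBlocks_diagonal
  rw [fromBlocks_diagonal_hadamard_eq_sum_vecMulVec_add_diagonal]
  refine (isCPMatrix_sum_vecMulVec _ ?_).add (isCPMatrix_diagonal ?_)
  · rintro ⟨i, j⟩ (k | k)
    · exact (Pi.single_nonneg (α := fun _ => ℝ)).2 (hs i j) k
    · exact (Pi.single_nonneg (α := fun _ => ℝ)).2 (ht i j) k
  · rintro (i | j)
    · exact sub_nonneg.2 (hrow i)
    · exact sub_nonneg.2 (hcol j)

end Fintype

/-- Matrix form of the main result: a doubly nonnegative `2n × 2n` matrix `J`,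
viewed with `2×2` blocks `J_{ij}` (indexed by pairs `(i,p)` with `i ∈ Fin n`,
`p ∈ Fin 2`), whose blocks satisfy `tr(J_{ij}) = δ_{ij}`, is completely positive. -/
theorem stmt2 (n : ℕ) (J : Matrix (Fin n × Fin 2) (Fin n × Fin 2) ℝ)
    (hPSD : J.PosSemidef) (hNN : ∀ u v, 0 ≤ J u v)
    (hTr : ∀ i j : Fin n,
      J (i, 0) (j, 0) + J (i, 1) (j, 1) = if i = j then 1 else 0) :
    IsCPMatrix J := by
  let e : Fin n × Fin 2 ≃ Fin n ⊕ Fin n := (Equiv.prodComm _ _).trans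
    ((finTwoEquiv.prodCongr (Equiv.refl _)).trans (Equiv.boolProdEquivSum _))
  have he0 (i : Fin n) : e (i, 0) = Sum.inl i := rfl
  have he1 (i : Fin n) : e (i, 1) = Sum.inr i := rfl
  have hoff : ∀ i j, i ≠ j → J (i, 0) (j, 0) = 0 ∧ J (i, 1) (j, 1) = 0 := fun i j hij =>
    (add_eq_zero_iff_of_nonneg (hNN _ _) (hNN _ _)).mp (by simpa [hij] using hTr i j)
  have hJ : J = (fromBlocks (diagonal fun i => J (i, 0) (i, 0)) (of fun i j => J (i, 0) (j, 1))
      (of fun i j => J (i, 0) (j, 1))ᵀ (diagonal fun j => J (j, 1) (j, 1))).submatrix e e := by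
    ext ⟨i, p⟩ ⟨j, q⟩
    fin_cases p <;> fin_cases q <;>
      simp only [Fin.zero_eta, Fin.mk_one, submatrix_apply, he0, he1, fromBlocks_apply₁₁,
        fromBlocks_apply₁₂, fromBlocks_apply₂₁, fromBlocks_apply₂₂, diagonal_apply,
        transpose_apply, of_apply]
    · split_ifs with h
      · rw [h]
      · exact (hoff i j h).1
    · exact hPSD.isSymm.apply (j, 0) (i, 1)
    · split_ifs with h
      · rw [h]
      · exact (hoff i j h).2
  rw [hJ, posSemidef_submatrix_equiv] at hPSD
  rw [hJ]
  exact (isCPMatrix_fromBlocks_diagonal (fun i j => hNN _ _) hPSD).submatrix e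
end

section
/- Let n ∈ ℕ and let A ∈ M_{2n}(ℝ) be a doubly nonnegative matrix (positive semidefinite and entrywise nonnegative) of block form A = [[D₀, B],[Bᵀ, D₁]] with D₀, D₁ diagonal n×n matrices and B an n×n matrix. Then A is completely positive, i.e., A = Σ_{t=1}^s x_t x_tᵀ for some entrywise nonnegative vectors x_t ∈ ℝ^{2n}. -/
/-!
Flipping the signs of the rows and columns indexed by one side of the bipartition turns `A`
into its comparison matrix `M(A)` (diagonal `A u u`, off-diagonal entries `-A u w`), which is
therefore positive semidefinite. A positive semidefinite matrix with nonpositive off-diagonal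
entries admits a positive vector `v` with `M(A) v ≥ 0`: a minimizer of the quadratic form on
the standard simplex gives such a `v ≥ 0`, and the coordinates where it vanishes are decoupled
from the others and handled by induction. Then `diag v * A * diag v` is diagonally dominant,
and a nonnegative diagonally dominant matrix is a nonnegative combination of the matrices
`(e u + e w)(e u + e w)ᵀ`.
-/

open Matrix

open Finset

theorem Real.nonneg_of_forall_Ioc_nonneg_add_mul {a b : ℝ}
    (h : ∀ ε ∈ Set.Ioc (0 : ℝ) 1, 0 ≤ a + ε * b) : 0 ≤ a := by
  have hcont : Continuous fun ε : ℝ => a + ε * b := by fun_prop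
  have hlim := (hcont.tendsto' 0 a (by simp)).mono_left (nhdsWithin_le_nhds (s := Set.Ioi 0))
  exact ge_of_tendsto hlim (Filter.eventually_of_mem (Ioc_mem_nhdsGT one_pos) h)

theorem Matrix.sum_smul_vecMulVec_single_add_single {ι R : Type*} [Fintype ι] [DecidableEq ι]
    [CommSemiring R] (c : ι → ι → R) :
    ∑ u, ∑ w, c u w • vecMulVec (Pi.single u 1 + Pi.single w 1) (Pi.single u 1 + Pi.single w 1)
      = diagonal (fun u => ∑ w, (c u w + c w u)) + of c + (of c)ᵀ := by
  ext r r'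
  simp only [sum_apply, smul_apply, vecMulVec_apply, Pi.add_apply, smul_eq_mul, mul_add, add_mul,
    sum_add_distrib, Pi.single_apply, ite_zero_mul_ite_zero, mul_one]
  rw [sum_comm (f := fun x y => c x y * if r = y ∧ r' = y then 1 else 0)]
  simp [ite_and, diagonal_apply, eq_comm]
  split_ifs <;> subst_vars <;> ring

namespace Matrix

variable {ι : Type*} [Fintype ι]

theorem IsSymm.add_smul_dotProduct_mulVec {N : Matrix ι ι ℝ} (hN : N.IsSymm) (v d : ι → ℝ)
    (ε : ℝ) : (v + ε • d) ⬝ᵥ N *ᵥ (v + ε • d)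
      = v ⬝ᵥ N *ᵥ v + 2 * ε * (d ⬝ᵥ N *ᵥ v) + ε ^ 2 * (d ⬝ᵥ N *ᵥ d) := by
  have hswap : v ⬝ᵥ N *ᵥ d = d ⬝ᵥ N *ᵥ v := by
    rw [dotProduct_mulVec, dotProduct_comm, ← mulVec_transpose, hN.eq]
  simp only [mulVec_add, mulVec_smul, add_dotProduct, dotProduct_add, smul_dotProduct,
    dotProduct_smul, smul_eq_mul, hswap]
  ring

theorem IsSymm.sub_dotProduct_mulVec_nonneg_of_isMinOn {N : Matrix ι ι ℝ} (hN : N.IsSymm)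
    {K : Set (ι → ℝ)} (hK : Convex ℝ K) {v y : ι → ℝ} (hv : v ∈ K) (hy : y ∈ K)
    (hmin : IsMinOn (fun z => z ⬝ᵥ N *ᵥ z) K v) : 0 ≤ (y - v) ⬝ᵥ N *ᵥ v := by
  suffices 0 ≤ 2 * ((y - v) ⬝ᵥ N *ᵥ v) by linarith
  refine Real.nonneg_of_forall_Ioc_nonneg_add_mul (b := (y - v) ⬝ᵥ N *ᵥ (y - v)) fun ε hε => ?_
  have hle := isMinOn_iff.mp hmin _ (hK.add_smul_sub_mem hv hy (Set.Ioc_subset_Icc_self hε))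
  rw [hN.add_smul_dotProduct_mulVec] at hle
  nlinarith [hε.1]

theorem PosSemidef.exists_mem_stdSimplex_mulVec_nonneg [Nonempty ι] {N : Matrix ι ι ℝ}
    (hN : N.PosSemidef) : ∃ v ∈ stdSimplex ℝ ι, 0 ≤ N *ᵥ v := by
  classical
  have hsymm : N.IsSymm := isHermitian_iff_isSymm.mp hN.isHermitian
  obtain ⟨v, hv, hmin⟩ := (isCompact_stdSimplex ℝ ι).exists_isMinOn
    ⟨_, single_mem_stdSimplex ℝ (Classical.arbitrary ι)⟩
    (by fun_prop : Continuous fun z : ι → ℝ => z ⬝ᵥ N *ᵥ z).continuousOn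
  refine ⟨v, hv, fun u => show 0 ≤ (N *ᵥ v) u from ?_⟩
  have h := hsymm.sub_dotProduct_mulVec_nonneg_of_isMinOn (convex_stdSimplex ℝ ι) hv
    (single_mem_stdSimplex ℝ u) hmin
  rw [sub_dotProduct, single_dotProduct, one_mul] at h
  have hQ : 0 ≤ v ⬝ᵥ N *ᵥ v := by simpa using hN.dotProduct_mulVec_nonneg v
  linarith

theorem PosSemidef.exists_pos_mulVec_nonneg_of_offDiag_nonpos {N : Matrix ι ι ℝ}
    (hN : N.PosSemidef) (hoff : ∀ u w, u ≠ w → N u w ≤ 0) :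
    ∃ v : ι → ℝ, (∀ u, 0 < v u) ∧ 0 ≤ N *ᵥ v := by
  induction hn : Fintype.card ι using Nat.strong_induction_on generalizing ι with
  | _ n ih =>
  classical
  cases isEmpty_or_nonempty ι
  · exact ⟨0, isEmptyElim, fun u => isEmptyElim u⟩
  obtain ⟨v, ⟨hv0, hv1⟩, hNv⟩ := hN.exists_mem_stdSimplex_mulVec_nonneg
  have hN_symm : N.IsSymm := isHermitian_iff_isSymm.mp hN.isHermitian
  -- `(N *ᵥ v) z ≥ 0` is a sum of nonpositive terms when `v z = 0`
  have hdecouple : ∀ z u, v z = 0 → v u ≠ 0 → N z u = 0 := by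
    intro z u hz hu
    have hterms : ∀ x ∈ univ, N z x * v x ≤ 0 := fun x _ => by
      rcases eq_or_ne z x with rfl | hzx
      · rw [hz, mul_zero]
      · exact mul_nonpos_of_nonpos_of_nonneg (hoff z x hzx) (hv0 x)
    have := (sum_eq_zero_iff_of_nonpos hterms).1 (le_antisymm (sum_nonpos hterms) (hNv z)) u
      (mem_univ u)
    exact (mul_eq_zero.1 this).resolve_right hu
  obtain ⟨u₀, hu₀⟩ : ∃ u, v u ≠ 0 := by
    by_contra! h
    simp [h] at hv1
  obtain ⟨w, hw, hNw⟩ := ih _ (hn ▸ Fintype.card_subtype_lt (p := fun u => v u = 0) hu₀)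
    (hN.submatrix Subtype.val) (fun z z' h => hoff _ _ (Subtype.coe_ne_coe.2 h)) rfl
  let w' : ι → ℝ := fun u => if h : v u = 0 then w ⟨u, h⟩ else 0
  have hNw' : ∀ u, (N *ᵥ w') u = ∑ z : {u // v u = 0}, N u z * w z := fun u => by
    rw [mulVec, dotProduct, ← Fintype.sum_subtype_add_sum_subtype (fun x => v x = 0)]
    refine (add_eq_left.2 (sum_eq_zero fun z _ => ?_)).trans (sum_congr rfl fun z _ => ?_) <;>
      simp [w', z.2]
  refine ⟨v + w', fun u => ?_, fun u => ?_⟩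
  · by_cases hu : v u = 0
    · simpa [w', hu] using hw ⟨u, hu⟩
    · simpa [w', hu] using (hv0 u).lt_of_ne' hu
  · rw [mulVec_add, Pi.add_apply, hNw']
    by_cases hu : v u = 0
    · exact add_nonneg (hNv u) (hNw ⟨u, hu⟩)
    · rw [sum_eq_zero fun z _ => by rw [← hN_symm.apply, hdecouple z u z.2 hu, zero_mul],
        add_zero]
      exact hNv u

def comparison [DecidableEq ι] (A : Matrix ι ι ℝ) : Matrix ι ι ℝ :=
  of fun u w => if u = w then |A u w| else -|A u w|

theorem PosSemidef.comparison_of_bipartite [DecidableEq ι] {A : Matrix ι ι ℝ} (hA : A.PosSemidef)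
    (hnn : ∀ u w, 0 ≤ A u w) (side : ι → Bool)
    (hside : ∀ u w, u ≠ w → side u = side w → A u w = 0) : A.comparison.PosSemidef := by
  let s : ι → ℝ := fun u => if side u then 1 else -1
  have hs : A.comparison = diagonal s * A * (diagonal s)ᴴ := by
    ext u w
    simp only [comparison, of_apply, diagonal_conjTranspose, star_trivial, diagonal_mul,
      mul_diagonal, abs_of_nonneg (hnn u w), s]
    rcases eq_or_ne u w with rfl | huw
    · cases side u <;> simp
    · rw [if_neg huw]
      by_cases hsw : side u = side w
      · simp [hside u w huw hsw]
      · cases hu : side u <;> cases hw : side w <;> simp_all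
  rw [hs]
  exact hA.mul_mul_conjTranspose_same _

end Matrix

namespace IsCPMatrix

variable {ι : Type*} [Fintype ι]

theorem of_sum {σ : Type*} [Fintype σ] (x : σ → ι → ℝ) (hx : ∀ t i, 0 ≤ x t i) :
    IsCPMatrix (∑ t, vecMulVec (x t) (x t)) :=
  ⟨Fintype.card σ, x ∘ (Fintype.equivFin σ).symm, fun _ _ => hx _ _,
    ((Fintype.equivFin σ).symm.sum_comp fun t => vecMulVec (x t) (x t)).symm⟩

theorem of_sum_smul {σ : Type*} [Fintype σ] (c : σ → ℝ) (y : σ → ι → ℝ) (hc : ∀ t, 0 ≤ c t)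
    (hy : ∀ t i, 0 ≤ y t i) : IsCPMatrix (∑ t, c t • vecMulVec (y t) (y t)) := by
  convert of_sum (fun t => √(c t) • y t) fun t i => mul_nonneg (Real.sqrt_nonneg _) (hy t i)
    using 2 with t
  rw [smul_vecMulVec, vecMulVec_smul, smul_smul, Real.mul_self_sqrt (hc t)]

theorem mul_mul_transpose {κ : Type*} [Fintype κ] {A : Matrix ι ι ℝ} (hA : IsCPMatrix A)
    {P : Matrix κ ι ℝ} (hP : ∀ i j, 0 ≤ P i j) : IsCPMatrix (P * A * Pᵀ) := by
  obtain ⟨s, x, hx, rfl⟩ := hA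
  convert of_sum (fun t => P *ᵥ x t) fun t i => sum_nonneg fun j _ => mul_nonneg (hP i j) (hx t j)
  simp only [Matrix.mul_sum, Matrix.sum_mul, mul_vecMulVec, vecMulVec_mul, vecMul_transpose]

theorem of_diagDominant [DecidableEq ι] {A : Matrix ι ι ℝ} (hsymm : A.IsSymm)
    (hnn : ∀ u w, 0 ≤ A u w) (hdom : ∀ u, ∑ w ∈ univ.erase u, A u w ≤ A u u) : IsCPMatrix A := by
  -- the pair `(u, u)` contributes `4 c u u` to the diagonal
  let c : ι → ι → ℝ := fun u w =>
    if u = w then (A u u - ∑ w ∈ univ.erase u, A u w) / 4 else A u w / 2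
  have hc_symm : ∀ u w, c w u = c u w := fun u w => by
    rcases eq_or_ne u w with rfl | huw
    · rfl
    · simp only [c, if_neg huw, if_neg huw.symm, hsymm.apply]
  have hc_row : ∀ u, ∑ w, c u w = c u u + (∑ w ∈ univ.erase u, A u w) / 2 := fun u => by
    rw [← add_sum_erase _ _ (mem_univ u), sum_div]
    exact congrArg _ (sum_congr rfl fun w hw => if_neg (ne_of_mem_erase hw).symm)
  have hA : A = ∑ p : ι × ι, c p.1 p.2 •
      vecMulVec (Pi.single p.1 1 + Pi.single p.2 1) (Pi.single p.1 1 + Pi.single p.2 1) := by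
    rw [Fintype.sum_prod_type, sum_smul_vecMulVec_single_add_single]
    ext r r'
    rcases eq_or_ne r r' with rfl | hrr
    · simp only [Matrix.add_apply, diagonal_apply_eq, of_apply, transpose_apply, hc_symm r,
        sum_add_distrib, hc_row]
      simp only [c, if_pos rfl]
      ring
    · simp only [Matrix.add_apply, diagonal_apply_ne _ hrr, of_apply, transpose_apply, c,
        if_neg hrr, if_neg hrr.symm, hsymm.apply]
      ring
  rw [hA]
  refine of_sum_smul _ _ (fun p => ?_) fun p i => add_nonneg ?_ ?_
  · dsimp only [c]
    split_ifs
    · linarith [hdom p.1]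
    · linarith [hnn p.1 p.2]
  all_goals rw [Pi.single_apply]; split_ifs <;> norm_num

theorem of_scaled_diagDominant [DecidableEq ι] {A : Matrix ι ι ℝ} (hsymm : A.IsSymm)
    (hnn : ∀ u w, 0 ≤ A u w) {v : ι → ℝ} (hv : ∀ u, 0 < v u)
    (hdom : ∀ u, ∑ w ∈ univ.erase u, A u w * v w ≤ A u u * v u) : IsCPMatrix A := by
  have hB : IsCPMatrix (diagonal v * A * diagonal v) := by
    refine of_diagDominant ?_ (fun u w => ?_) fun u => ?_
    · simp [IsSymm, transpose_mul, hsymm.eq, Matrix.mul_assoc]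
    · simp only [diagonal_mul, mul_diagonal]
      exact mul_nonneg (mul_nonneg (hv u).le (hnn u w)) (hv w).le
    · simp only [diagonal_mul, mul_diagonal, mul_assoc, ← mul_sum]
      exact mul_le_mul_of_nonneg_left (hdom u) (hv u).le
  convert hB.mul_mul_transpose (P := diagonal v⁻¹) fun i j => ?_
  · ext u w
    simp only [diagonal_transpose, diagonal_mul, mul_diagonal, Pi.inv_apply]
    field_simp [(hv u).ne', (hv w).ne']
  · rw [diagonal_apply]
    split_ifs
    exacts [inv_nonneg.mpr (hv i).le, le_rfl]

theorem of_posSemidef_comparison [DecidableEq ι] {A : Matrix ι ι ℝ}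
    (hnn : ∀ u w, 0 ≤ A u w) (hM : A.comparison.PosSemidef) : IsCPMatrix A := by
  obtain ⟨v, hv, hMv⟩ := hM.exists_pos_mulVec_nonneg_of_offDiag_nonpos fun u w huw => by
    simp [comparison, huw]
  have hsymm : A.IsSymm := by
    ext u w
    have := (isHermitian_iff_isSymm.mp hM.isHermitian).apply u w
    rcases eq_or_ne u w with rfl | huw
    · rfl
    · simpa [comparison, huw, huw.symm, abs_of_nonneg (hnn _ _)] using this
  refine of_scaled_diagDominant hsymm hnn hv fun u => ?_
  have h := hMv u
  have hoff : ∑ w ∈ univ.erase u, A.comparison u w * v w = -∑ w ∈ univ.erase u, A u w * v w := by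
    rw [← sum_neg_distrib]
    refine sum_congr rfl fun w hw => ?_
    simp [comparison, (ne_of_mem_erase hw).symm, abs_of_nonneg (hnn u w)]
  rw [Pi.zero_apply, mulVec, dotProduct, ← add_sum_erase _ _ (mem_univ u), hoff] at h
  simp only [comparison, of_apply, ↓reduceIte, abs_of_nonneg (hnn u u)] at h
  linarith

end IsCPMatrix

/-- A doubly nonnegative matrix of block form `[[D₀, B], [Bᵀ, D₁]]` with
`D₀, D₁` diagonal is completely positive. -/
theorem stmt6 (n : ℕ) (D₀ D₁ B : Matrix (Fin n) (Fin n) ℝ)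
    (hD₀ : D₀.IsDiag) (hD₁ : D₁.IsDiag)
    (A : Matrix (Fin n ⊕ Fin n) (Fin n ⊕ Fin n) ℝ)
    (hA : A = Matrix.fromBlocks D₀ B Bᵀ D₁)
    (hPSD : A.PosSemidef) (hNN : ∀ u v, 0 ≤ A u v) :
    IsCPMatrix A := by
  refine IsCPMatrix.of_posSemidef_comparison hNN (hPSD.comparison_of_bipartite hNN Sum.isLeft ?_)
  subst hA
  rintro (i | i) (j | j) hij hside
  · exact hD₀ fun h => hij (congrArg _ h)
  · simp at hside
  · simp at hside
  · exact hD₁ fun h => hij (congrArg _ h)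
end

section
/- Every CPDNN qutrit-to-qubit quantum channel Φ : M_3(ℂ) → M_2(ℂ) is CPCP: if Φ is a completely positive trace-preserving linear map such that (id_k ⊗ Φ) maps doubly nonnegative matrices in M_{3k} to doubly nonnegative matrices in M_{2k} for every k ∈ ℕ, then (id_k ⊗ Φ) maps completely positive matrices in M_{3k} to completely positive matrices in M_{2k} for every k ∈ ℕ. -/
open Matrix
open scoped ComplexOrder

/-- A complex matrix is completely positive if it is a finite sum of rank-one
matrices `x xᵀ` with `x` a real entrywise nonnegative vector (viewed in `ℂ`). -/
def IsCPMat {ι : Type*} [Fintype ι] (A : Matrix ι ι ℂ) : Prop :=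
  ∃ (s : ℕ) (x : Fin s → ι → ℝ), (∀ t i, 0 ≤ x t i) ∧
    ∀ i j, A i j = ((∑ t, x t i * x t j : ℝ) : ℂ)

/-- A complex matrix is doubly nonnegative if it is positive semidefinite and
every entry is a nonnegative real number. -/
def IsDNNMat {ι : Type*} [Fintype ι] (A : Matrix ι ι ℂ) : Prop :=
  A.PosSemidef ∧ ∀ i j, 0 ≤ (A i j).re ∧ (A i j).im = 0

/-- The map `id_k ⊗ Φ` acting blockwise: the `((a,p),(b,q))` entry of the output
is `Φ(X_{ab})_{pq}`, where `X_{ab}` is the `(a,b)` block of `X`. -/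
def idTensor {n m : ℕ} (Φ : Matrix (Fin n) (Fin n) ℂ →ₗ[ℂ] Matrix (Fin m) (Fin m) ℂ)
    (k : ℕ) (X : Matrix (Fin k × Fin n) (Fin k × Fin n) ℂ) :
    Matrix (Fin k × Fin m) (Fin k × Fin m) ℂ :=
  Matrix.of fun ap bq => Φ (Matrix.of fun i j => X (ap.1, i) (bq.1, j)) ap.2 bq.2

/-- `Φ` is completely positive as a linear map between matrix algebras. -/
def IsCPMap {n m : ℕ} (Φ : Matrix (Fin n) (Fin n) ℂ →ₗ[ℂ] Matrix (Fin m) (Fin m) ℂ) : Prop :=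
  ∀ (k : ℕ) (X : Matrix (Fin k × Fin n) (Fin k × Fin n) ℂ),
    X.PosSemidef → (idTensor Φ k X).PosSemidef

/-- `Φ` is trace-preserving. -/
def IsTP {n m : ℕ} (Φ : Matrix (Fin n) (Fin n) ℂ →ₗ[ℂ] Matrix (Fin m) (Fin m) ℂ) : Prop :=
  ∀ X, (Φ X).trace = X.trace

/-- `Φ` is CPCP: `id_k ⊗ Φ` maps completely positive matrices to completely
positive matrices for every `k`. -/
def IsCPCP {n m : ℕ} (Φ : Matrix (Fin n) (Fin n) ℂ →ₗ[ℂ] Matrix (Fin m) (Fin m) ℂ) : Prop :=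
  ∀ (k : ℕ) (X : Matrix (Fin k × Fin n) (Fin k × Fin n) ℂ),
    IsCPMat X → IsCPMat (idTensor Φ k X)

/-- `Φ` is CPDNN: `id_k ⊗ Φ` maps doubly nonnegative matrices to doubly
nonnegative matrices for every `k`. -/
def IsCPDNN {n m : ℕ} (Φ : Matrix (Fin n) (Fin n) ℂ →ₗ[ℂ] Matrix (Fin m) (Fin m) ℂ) : Prop :=
  ∀ (k : ℕ) (X : Matrix (Fin k × Fin n) (Fin k × Fin n) ℂ),
    IsDNNMat X → IsDNNMat (idTensor Φ k X)

/-- The Choi matrix `J(Φ) = Σ_{i,j} E_{ij} ⊗ Φ(E_{ij})`, with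
`((i,p),(j,q))` entry equal to `Φ(E_{ij})_{pq}`. -/
def choi {n m : ℕ} (Φ : Matrix (Fin n) (Fin n) ℂ →ₗ[ℂ] Matrix (Fin m) (Fin m) ℂ) :
    Matrix (Fin n × Fin m) (Fin n × Fin m) ℂ :=
  Matrix.of fun ip jq => Φ (Matrix.single ip.1 jq.1 1) ip.2 jq.2

/-
The Choi matrix `J` of `Φ` is the image under `id ⊗ Φ` of the doubly nonnegative matrix
`Σ_{a,b} E_ab ⊗ E_ab`, so it is doubly nonnegative, and trace preservation then forces
`J_{(i,p),(j,p)} = 0` for `i ≠ j`: as a real matrix, `J` is supported on the complete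
bipartite graph whose two parts are the two output indices `p = 0, 1`.

A doubly nonnegative matrix `R` with bipartite support is completely positive. If `R` is
positive definite, flipping the signs of one part turns it into a positive definite matrix
`A = 2 diag(R) - R` with nonpositive off-diagonal entries, and `w = A⁻¹ 1` is then a positive
vector with `Σ_v R_uv w_v ≤ 2 R_uu w_u`. So `diag(w) R diag(w)` is diagonally dominant, hence a
sum of the nonnegative rank-one matrices `(e_a + e_b)(e_a + e_b)ᵀ`; the semidefinite case
follows since the completely positive matrices with a fixed number of factors form a closed set.

Finally, if `J = Σ_r z_r z_rᵀ` and `X = Σ_t x_t x_tᵀ` with nonnegative factors, then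
`(id ⊗ Φ)(X) = Σ_{t,r} y_{tr} y_{tr}ᵀ` with `y_{tr}(a,p) = Σ_i x_t(a,i) z_r(i,p) ≥ 0`.
-/

def IsCPWith (T : Type*) [Fintype T] {ι : Type*} (R : Matrix ι ι ℝ) : Prop :=
  ∃ z : T → ι → ℝ, (∀ t u, 0 ≤ z t u) ∧ ∀ u v, R u v = ∑ t, z t u * z t v

section IsCPWith

variable {ι T : Type*} [Fintype T]

lemma isCPMat_of_fintype {A : Matrix ι ι ℂ} [Fintype ι] (z : T → ι → ℝ) (hz : ∀ t u, 0 ≤ z t u)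
    (hA : ∀ u v, A u v = ((∑ t, z t u * z t v : ℝ) : ℂ)) : IsCPMat A :=
  ⟨Fintype.card T, fun t => z ((Fintype.equivFin T).symm t), fun t u => hz _ u, fun u v => by
    rw [hA, Equiv.sum_comp (Fintype.equivFin T).symm fun t => z t u * z t v]⟩

lemma IsCPWith.isCPMat_map_ofReal [Fintype ι] {R : Matrix ι ι ℝ} (hR : IsCPWith T R) :
    IsCPMat (R.map ((↑) : ℝ → ℂ)) := by
  obtain ⟨z, hz, hR⟩ := hR
  exact isCPMat_of_fintype z hz fun u v => by rw [map_apply, hR]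

lemma IsCPWith.of_diagonal_scaling {M : Matrix ι ι ℝ} (hM : IsCPWith T M) {d : ι → ℝ}
    (hd : ∀ u, 0 ≤ d u) : IsCPWith T (of fun u v => d u * M u v * d v) := by
  obtain ⟨z, hz, hM⟩ := hM
  refine ⟨fun t u => d u * z t u, fun t u => mul_nonneg (hd u) (hz t u), fun u v => ?_⟩
  simp only [of_apply, hM, Finset.mul_sum, Finset.sum_mul]
  exact Finset.sum_congr rfl fun t _ => by ring

lemma isCPWith_of_diagDominant [Fintype ι] [DecidableEq ι] {M : Matrix ι ι ℝ} (hM : M.IsSymm)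
    (hnn : ∀ u v, 0 ≤ M u v) (hdom : ∀ u, ∑ v, M u v ≤ 2 * M u u) : IsCPWith (ι × ι) M := by
  -- `M = Σ_{a,b} c_ab (e_a + e_b)(e_a + e_b)ᵀ`; the diagonal coefficients absorb the surplus.
  set c : ι → ι → ℝ := fun a b => M a b / 2 - if a = b then (∑ v, M a v) / 4 else 0
  have hc : ∀ a b, 0 ≤ c a b := by
    intro a b
    by_cases hab : a = b
    · subst hab; simp only [c, ↓reduceIte]; linarith [hdom a]
    · simp only [c, if_neg hab]; linarith [hnn a b]
  set e : ι → ι → ι → ℝ := fun a b => Pi.single a 1 + Pi.single b 1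
  refine ⟨fun ab u => √(c ab.1 ab.2) * e ab.1 ab.2 u, fun ab u => ?_, fun u v => ?_⟩
  · refine mul_nonneg (Real.sqrt_nonneg _) (add_nonneg ?_ ?_) <;>
      simp only [Pi.single_apply] <;> split_ifs <;> norm_num
  · have hexp : M u v = ∑ a, ∑ b, c a b * (e a b u * e a b v) := by
      simp only [c, e, Pi.add_apply, Pi.single_apply, sub_mul, ite_mul, zero_mul, add_mul,
        mul_add]
      simp only [mul_ite, mul_one, mul_zero, Finset.sum_add_distrib, Finset.sum_sub_distrib,
        Finset.sum_ite_irrel, Finset.sum_const_zero, Finset.sum_ite_eq, Finset.mem_univ,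
        ↓reduceIte]
      rw [hM.apply u v]
      split_ifs with h
      · subst h
        simp only [← Finset.sum_div, hM.apply]
        ring
      · ring
    rw [hexp, Fintype.sum_prod_type]
    refine Finset.sum_congr rfl fun a _ => Finset.sum_congr rfl fun b _ => ?_
    rw [← Real.mul_self_sqrt (hc a b)]
    ring

lemma isCPWith_of_scaled_diagDominant [Fintype ι] [DecidableEq ι] {R : Matrix ι ι ℝ}
    (hR : R.IsSymm) (hnn : ∀ u v, 0 ≤ R u v) {w : ι → ℝ} (hw : ∀ u, 0 < w u)
    (hdom : ∀ u, ∑ v, R u v * w v ≤ 2 * (R u u * w u)) : IsCPWith (ι × ι) R := by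
  set M : Matrix ι ι ℝ := of fun u v => w u * R u v * w v
  have hM : IsCPWith (ι × ι) M := by
    refine isCPWith_of_diagDominant ?_ (fun u v => ?_) fun u => ?_
    · ext u v; simp only [M, transpose_apply, of_apply, hR.apply]; ring
    · exact mul_nonneg (mul_nonneg (hw u).le (hnn u v)) (hw v).le
    · simp only [M, of_apply, mul_assoc, ← Finset.mul_sum]
      nlinarith [hdom u, hw u]
  convert hM.of_diagonal_scaling (d := fun u => (w u)⁻¹) fun u => (inv_pos.2 (hw u)).le
  ext u v
  simp only [M, of_apply]
  field_simp [(hw u).ne', (hw v).ne']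

theorem isClosed_setOf_isCPWith [Finite ι] : IsClosed {R : Matrix ι ι ℝ | IsCPWith T R} := by
  refine isClosed_of_closure_subset fun R hR => ?_
  -- Near `R` the factors are bounded through the diagonal, so there the cone is a compact image.
  set U : Set (Matrix ι ι ℝ) := {M | ∀ u, M u u < R u u + 1}
  set Q : Set (T → ι → ℝ) := Set.univ.pi fun _ => Set.univ.pi fun u => Set.Icc 0 √(R u u + 1)
  set F : (T → ι → ℝ) → Matrix ι ι ℝ := fun z => of fun u v => ∑ t, z t u * z t v
  have hU : IsOpen U := by
    simp only [U, Set.ofPred_forall]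
    exact isOpen_iInter_of_finite fun u => isOpen_lt (by fun_prop) continuous_const
  have hF : Continuous F := continuous_matrix fun u v => by fun_prop
  have hQ : IsCompact Q := isCompact_univ_pi fun _ => isCompact_univ_pi fun _ => isCompact_Icc
  have hsub : U ∩ {R | IsCPWith T R} ⊆ F '' Q := by
    rintro M ⟨hMU, z, hz, hM⟩
    refine ⟨z, fun t _ u _ => ⟨hz t u, ?_⟩, ext fun u v => (hM u v).symm⟩
    refine (le_abs_self _).trans (Real.abs_le_sqrt ?_)
    calc z t u ^ 2 ≤ ∑ t', z t' u * z t' u := by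
          rw [sq]
          exact Finset.single_le_sum (f := fun t' => z t' u * z t' u)
            (fun t' _ => mul_self_nonneg _) (Finset.mem_univ t)
      _ = M u u := (hM u u).symm
      _ ≤ R u u + 1 := (hMU u).le
  have hRU : R ∈ U := fun u => lt_add_one _
  obtain ⟨z, hz, rfl⟩ :=
    (hQ.image hF).isClosed.closure_subset (closure_mono hsub (hU.inter_closure ⟨hRU, hR⟩))
  exact ⟨z, fun t u => (hz t trivial u trivial).1, fun u v => rfl⟩

end IsCPWith

lemma Matrix.PosDef.nonneg_of_mulVec_eq_one {ι : Type*} [Fintype ι] {A : Matrix ι ι ℝ}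
    (hA : A.PosDef) (hoff : ∀ u v, u ≠ v → A u v ≤ 0) {w : ι → ℝ} (hw : A *ᵥ w = 1) :
    0 ≤ w := by
  -- Test `A` against the negative part `n` of `w`: `nᵀ A w = Σ n ≥ 0` but `nᵀ A w ≤ -nᵀ A n`.
  set n := w⁻
  set p := w⁺
  have hn0 : ∀ u, 0 ≤ n u := Pi.le_def.1 (negPart_nonneg w)
  have hpn : ∀ u, n u * p u = 0 := fun u => by
    rcases le_total 0 (w u) with h | h
    · simp [n, negPart_eq_zero.2 h]
    · simp [p, posPart_eq_zero.2 h]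
  have hcross : n ⬝ᵥ (A *ᵥ p) ≤ 0 := by
    simp only [dotProduct, mulVec, Finset.mul_sum]
    refine Finset.sum_nonpos fun u _ => Finset.sum_nonpos fun v _ => ?_
    rcases eq_or_ne u v with rfl | huv
    · rw [mul_left_comm, hpn u, mul_zero]
    · exact mul_nonpos_of_nonneg_of_nonpos (hn0 u)
        (mul_nonpos_of_nonpos_of_nonneg (hoff u v huv) (Pi.le_def.1 (posPart_nonneg w) v))
  have hsum : n ⬝ᵥ (A *ᵥ w) = ∑ u, n u := by simp [hw, dotProduct]
  have hsplit : n ⬝ᵥ (A *ᵥ w) = n ⬝ᵥ (A *ᵥ p) - n ⬝ᵥ (A *ᵥ n) := by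
    rw [← dotProduct_sub, ← mulVec_sub, posPart_sub_negPart]
  have hn : n = 0 := by
    by_contra hn
    have hpos : 0 < n ⬝ᵥ (A *ᵥ n) := by simpa using hA.dotProduct_mulVec_pos hn
    have : 0 ≤ ∑ u, n u := Finset.sum_nonneg fun u _ => hn0 u
    linarith
  exact negPart_eq_zero.1 hn

section Bipartite

variable {ι : Type*} [Fintype ι] [DecidableEq ι] {R : Matrix ι ι ℝ} (side : ι → Fin 2)

lemma isCPWith_of_posDef_of_bipartite (hR : R.PosDef) (hnn : ∀ u v, 0 ≤ R u v)
    (hside : ∀ u v, u ≠ v → side u = side v → R u v = 0) : IsCPWith (ι × ι) R := by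
  set s : ι → ℝ := fun u => if side u = 0 then 1 else -1
  have hss : ∀ u, s u * s u = 1 := fun u => by simp only [s]; split_ifs <;> norm_num
  have hflip : ∀ u v, s u * R u v * s v = (if u = v then 2 * R u v else 0) - R u v := by
    intro u v
    by_cases huv : u = v
    · subst huv; rw [if_pos rfl, mul_right_comm, hss]; ring
    by_cases hs : side u = side v
    · simp [hside u v huv hs, huv]
    · have : s u * s v = -1 := by
        simp only [s]; revert hs; generalize side u = a; generalize side v = b
        fin_cases a <;> fin_cases b <;> simp
      rw [if_neg huv, mul_right_comm, this]; ring
  set A : Matrix ι ι ℝ := of fun u v => (if u = v then 2 * R u v else 0) - R u v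
  have hA : A.PosDef := by
    have hinj : Function.Injective (diagonal s).mulVec := fun x y hxy => by
      simpa [mulVec_mulVec, diagonal_mul_diagonal, hss] using congrArg (diagonal s).mulVec hxy
    convert hR.conjTranspose_mul_mul_same hinj using 1
    ext u v
    simp only [A, of_apply, diagonal_conjTranspose, mul_diagonal, diagonal_mul, star_trivial,
      ← hflip]
  set w := A⁻¹ *ᵥ 1
  have hw : A *ᵥ w = 1 := by
    rw [mulVec_mulVec, mul_nonsing_inv _ ((isUnit_iff_isUnit_det A).1 hA.isUnit), one_mulVec]
  have hw0 : ∀ u, 0 ≤ w u :=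
    Pi.le_def.1 (hA.nonneg_of_mulVec_eq_one (fun u v huv => by simp [A, huv, hnn u v]) hw)
  have hrow : ∀ u, 2 * (R u u * w u) = 1 + ∑ v, R u v * w v := fun u => by
    have := congrFun hw u
    simp only [A, mulVec, dotProduct, of_apply, sub_mul, ite_mul, zero_mul,
      Finset.sum_sub_distrib, Finset.sum_ite_eq, Finset.mem_univ, if_true, Pi.one_apply] at this
    linarith
  have hsum : ∀ u, 0 ≤ ∑ v, R u v * w v := fun u =>
    Finset.sum_nonneg fun v _ => mul_nonneg (hnn u v) (hw0 v)
  refine isCPWith_of_scaled_diagDominant (isHermitian_iff_isSymm.1 hR.isHermitian) hnn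
    (fun u => (hw0 u).lt_of_ne' fun h => ?_) fun u => by linarith [hrow u]
  have := hrow u
  rw [h, mul_zero, mul_zero] at this
  linarith [hsum u]

lemma isCPWith_of_posSemidef_of_bipartite (hR : R.PosSemidef) (hnn : ∀ u v, 0 ≤ R u v)
    (hside : ∀ u v, u ≠ v → side u = side v → R u v = 0) : IsCPWith (ι × ι) R := by
  have hpert : ∀ δ : ℝ, 0 < δ → IsCPWith (ι × ι) (R + δ • 1) := fun δ hδ =>
    isCPWith_of_posDef_of_bipartite side (PosDef.posSemidef_add hR (PosDef.one.smul hδ))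
      (fun u v => by
        simp only [Matrix.add_apply, Matrix.smul_apply, one_apply, smul_eq_mul]
        have := hnn u v; split_ifs <;> nlinarith)
      fun u v huv hs => by simp [hside u v huv hs, huv]
  have hlim : Filter.Tendsto (fun δ : ℝ => R + δ • 1) (nhdsWithin 0 (Set.Ioi 0)) (nhds R) := by
    have : Continuous fun δ : ℝ => R + δ • (1 : Matrix ι ι ℝ) := by fun_prop
    simpa using (this.tendsto 0).mono_left nhdsWithin_le_nhds
  exact isClosed_setOf_isCPWith.mem_of_tendsto hlim (eventually_nhdsWithin_of_forall hpert)

end Bipartite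

lemma posSemidef_of_posSemidef_map_ofReal {ι : Type*} [Fintype ι] {R : Matrix ι ι ℝ}
    (h : (R.map ((↑) : ℝ → ℂ)).PosSemidef) : R.PosSemidef := by
  refine .of_dotProduct_mulVec_nonneg ?_ fun x => ?_
  · ext u v
    exact_mod_cast by simpa using congrFun (congrFun h.isHermitian u) v
  · have := h.dotProduct_mulVec_nonneg fun u => (x u : ℂ)
    simp only [dotProduct, mulVec, map_apply, Pi.star_apply, Complex.star_def,
      Complex.conj_ofReal] at this
    exact_mod_cast this

lemma IsDNNMat.map_re_map_ofReal {ι : Type*} [Fintype ι] {A : Matrix ι ι ℂ} (hA : IsDNNMat A) :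
    (A.map Complex.re).map ((↑) : ℝ → ℂ) = A := by
  ext u v
  exact Complex.ext (by simp) (by simp [(hA.2 u v).2])

section Channel

variable {n m : ℕ} (Φ : Matrix (Fin n) (Fin n) ℂ →ₗ[ℂ] Matrix (Fin m) (Fin m) ℂ)

lemma idTensor_apply (k : ℕ) (X : Matrix (Fin k × Fin n) (Fin k × Fin n) ℂ) (a b : Fin k)
    (p q : Fin m) :
    idTensor Φ k X (a, p) (b, q) = ∑ i, ∑ j, X (a, i) (b, j) * choi Φ (i, p) (j, q) := by
  have hblock : (of fun i j => X (a, i) (b, j)) = ∑ i, ∑ j, X (a, i) (b, j) • single i j 1 := by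
    conv_lhs => rw [matrix_eq_sum_single (of fun i j => X (a, i) (b, j))]
    simp [smul_single]
  simp only [idTensor, choi, of_apply, hblock, map_sum, map_smul, Matrix.sum_apply,
    Matrix.smul_apply, smul_eq_mul]

lemma isDNNMat_choi (hΦ : IsCPDNN Φ) : IsDNNMat (choi Φ) := by
  -- `choi Φ = (id ⊗ Φ)(ω ωᵀ)` for the unnormalised maximally entangled vector `ω`.
  set ω : Fin n × Fin n → ℂ := fun ai => if ai.1 = ai.2 then 1 else 0
  have hω : IsDNNMat (vecMulVec ω (star ω)) :=
    ⟨posSemidef_vecMulVec_self_star ω, fun u v => by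
      simp only [ω, vecMulVec_apply, Pi.star_apply]; split_ifs <;> simp⟩
  convert hΦ n _ hω
  ext ⟨a, p⟩ ⟨b, q⟩
  simp [idTensor_apply, ω, vecMulVec_apply]

lemma choi_apply_eq_zero_of_ne (hTP : IsTP Φ) (hJ : IsDNNMat (choi Φ)) {i j : Fin n}
    (hij : i ≠ j) (p : Fin m) : choi Φ (i, p) (j, p) = 0 := by
  have htr : ∑ p, (choi Φ (i, p) (j, p)).re = 0 := by
    have := congrArg Complex.re (hTP (single i j 1))
    rw [trace_single_eq_of_ne _ _ _ hij] at this
    simpa [trace, choi, Complex.re_sum] using this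
  have hre := (Finset.sum_eq_zero_iff_of_nonneg fun p _ => (hJ.2 (i, p) (j, p)).1).1 htr p
    (Finset.mem_univ p)
  exact Complex.ext hre (hJ.2 _ _).2

lemma isCPCP_of_isCPMat_choi (hJ : IsCPMat (choi Φ)) : IsCPCP Φ := by
  obtain ⟨S, z, hz, hJ⟩ := hJ
  rintro k X ⟨s, x, hx, hX⟩
  refine isCPMat_of_fintype (T := Fin s × Fin S)
    (fun tr ap => ∑ i, x tr.1 (ap.1, i) * z tr.2 (i, ap.2))
    (fun tr ap => Finset.sum_nonneg fun i _ => mul_nonneg (hx _ _) (hz _ _)) ?_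
  rintro ⟨a, p⟩ ⟨b, q⟩
  simp only [idTensor_apply, hX, hJ, ← Complex.ofReal_mul, ← Complex.ofReal_sum]
  congr 1
  simp only [Finset.sum_mul_sum, Fintype.sum_prod_type]
  conv_lhs => enter [2, i]; rw [Finset.sum_comm]
  rw [Finset.sum_comm]
  conv_lhs => enter [2, t, 2, i]; rw [Finset.sum_comm]
  conv_lhs => enter [2, t]; rw [Finset.sum_comm]
  refine Finset.sum_congr rfl fun t _ => Finset.sum_congr rfl fun r _ =>
    Finset.sum_congr rfl fun i _ => Finset.sum_congr rfl fun j _ => by ring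

end Channel

lemma isCPMat_choi_of_isCPDNN {n : ℕ} (Φ : Matrix (Fin n) (Fin n) ℂ →ₗ[ℂ] Matrix (Fin 2) (Fin 2) ℂ)
    (hTP : IsTP Φ) (hΦ : IsCPDNN Φ) : IsCPMat (choi Φ) := by
  have hJ := isDNNMat_choi Φ hΦ
  rw [← hJ.map_re_map_ofReal]
  refine IsCPWith.isCPMat_map_ofReal <| isCPWith_of_posSemidef_of_bipartite Prod.snd
    (posSemidef_of_posSemidef_map_ofReal (hJ.map_re_map_ofReal.symm ▸ hJ.1))
    (fun u v => (hJ.2 u v).1) ?_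
  rintro ⟨i, p⟩ ⟨j, q⟩ hne (rfl : p = q)
  rw [map_apply, choi_apply_eq_zero_of_ne Φ hTP hJ (by rintro rfl; exact hne rfl) p,
    Complex.zero_re]

theorem stmt8_general
    (Φ : Matrix (Fin 3) (Fin 3) ℂ →ₗ[ℂ] Matrix (Fin 2) (Fin 2) ℂ)
    (hTP : IsTP Φ) (hCPDNN : IsCPDNN Φ) :
    IsCPCP Φ :=
  isCPCP_of_isCPMat_choi Φ (isCPMat_choi_of_isCPDNN Φ hTP hCPDNN)

/-- Every CPDNN qutrit-to-qubit quantum channel `Φ : M₃(ℂ) → M₂(ℂ)` is CPCP. -/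
theorem stmt8
    (Φ : Matrix (Fin 3) (Fin 3) ℂ →ₗ[ℂ] Matrix (Fin 2) (Fin 2) ℂ)
    (hCP : IsCPMap Φ) (hTP : IsTP Φ) (hCPDNN : IsCPDNN Φ) :
    IsCPCP Φ :=
  stmt8_general Φ hTP hCPDNN
end

section
/- Let Φ : M_n(ℂ) → M_m(ℂ) be a linear map. Then Φ is CPCP (i.e., for every k ∈ ℕ, (id_k ⊗ Φ) maps completely positive matrices in M_{kn} to completely positive matrices in M_{km}) if and only if its Choi matrix J(Φ) = Σ_{i,j=1}^n E_{ij} ⊗ Φ(E_{ij}) is a completely positive nm×nm matrix. -/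
open Matrix
open scoped ComplexOrder

/-!
Writing `ω = Σᵢ eᵢ ⊗ eᵢ`, the matrix `ω ωᵀ` is completely positive and `(id_n ⊗ Φ)(ω ωᵀ) = J(Φ)`,
which gives one direction. Conversely, `Φ(Y)_{pq} = Σ_{i,j} Y_{ij} J(Φ)_{(i,p),(j,q)}`; if
`X = Σ_s x_s x_sᵀ` and `J(Φ) = Σ_t y_t y_tᵀ` with nonnegative vectors, this expresses
`(id_k ⊗ Φ)(X)` as `Σ_{s,t} z_{st} z_{st}ᵀ` with the nonnegative vectors
`z_{st}(a,p) = Σ_i x_s(a,i) y_t(i,p)`.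
-/

lemma IsCPMat.of_fintype {ι σ : Type*} [Fintype ι] [Fintype σ] {A : Matrix ι ι ℂ}
    (x : σ → ι → ℝ) (hx : ∀ t i, 0 ≤ x t i)
    (hA : ∀ i j, A i j = ((∑ t, x t i * x t j : ℝ) : ℂ)) : IsCPMat A := by
  let e := Fintype.equivFin σ
  refine ⟨Fintype.card σ, fun t => x (e.symm t), fun t i => hx _ i, fun i j => ?_⟩
  rw [hA, ← e.symm.sum_comp]

lemma isCPMat_rankOne {ι : Type*} [Fintype ι] (v : ι → ℝ) (hv : ∀ i, 0 ≤ v i) :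
    IsCPMat (of fun i j => ((v i * v j : ℝ) : ℂ)) :=
  .of_fintype (fun (_ : Unit) => v) (fun _ => hv) fun i j => by simp

def diagIndicator (n : ℕ) : Fin n × Fin n → ℝ := fun ij => if ij.1 = ij.2 then 1 else 0

lemma diagIndicator_nonneg {n : ℕ} (ij : Fin n × Fin n) : 0 ≤ diagIndicator n ij := by
  unfold diagIndicator
  split_ifs <;> norm_num

lemma of_diagIndicator_mul_diagIndicator {n : ℕ} (a b : Fin n) :
    (of fun i j => ((diagIndicator n (a, i) * diagIndicator n (b, j) : ℝ) : ℂ)) = single a b 1 := by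
  ext i j
  by_cases hi : a = i <;> by_cases hj : b = j <;> simp [diagIndicator, hi, hj]

lemma choi_eq_idTensor {n m : ℕ} (Φ : Matrix (Fin n) (Fin n) ℂ →ₗ[ℂ] Matrix (Fin m) (Fin m) ℂ) :
    choi Φ = idTensor Φ n (of fun ai bj => ((diagIndicator n ai * diagIndicator n bj : ℝ) : ℂ)) := by
  ext ⟨a, p⟩ ⟨b, q⟩
  simp only [choi, idTensor, of_apply, of_diagIndicator_mul_diagIndicator]

lemma apply_eq_sum_choi {n m : ℕ} (Φ : Matrix (Fin n) (Fin n) ℂ →ₗ[ℂ] Matrix (Fin m) (Fin m) ℂ)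
    (X : Matrix (Fin n) (Fin n) ℂ) (p q : Fin m) :
    Φ X p q = ∑ i, ∑ j, X i j * choi Φ (i, p) (j, q) := by
  conv_lhs => rw [matrix_eq_sum_single X]
  simp only [map_sum, Matrix.sum_apply, choi, of_apply]
  refine Finset.sum_congr rfl fun i _ => Finset.sum_congr rfl fun j _ => ?_
  simpa using congrFun₂ (Φ.map_smul (X i j) (single i j 1)) p q

lemma sum_sum_gram_mul_gram {R σ τ ι κ : Type*} [CommSemiring R] [Fintype σ] [Fintype τ]
    [Fintype ι] [Fintype κ] (x : σ → ι → R) (x' : σ → κ → R) (y : τ → ι → R) (y' : τ → κ → R) :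
    ∑ i, ∑ j, (∑ s, x s i * x' s j) * (∑ t, y t i * y' t j) =
      ∑ st : σ × τ, (∑ i, x st.1 i * y st.2 i) * (∑ j, x' st.1 j * y' st.2 j) := by
  calc _ = ∑ ij : ι × κ, ∑ st : σ × τ,
          x st.1 ij.1 * y st.2 ij.1 * (x' st.1 ij.2 * y' st.2 ij.2) := by
        simp only [Fintype.sum_prod_type, Finset.sum_mul_sum]
        refine Finset.sum_congr rfl fun i _ => Finset.sum_congr rfl fun j _ =>
          Finset.sum_congr rfl fun s _ => Finset.sum_congr rfl fun t _ => by ring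
    _ = _ := by
        rw [Finset.sum_comm]
        simp only [Fintype.sum_prod_type, Finset.sum_mul_sum]

lemma isCPMat_idTensor_of_isCPMat_choi {n m : ℕ}
    {Φ : Matrix (Fin n) (Fin n) ℂ →ₗ[ℂ] Matrix (Fin m) (Fin m) ℂ} (hΦ : IsCPMat (choi Φ))
    {k : ℕ} {X : Matrix (Fin k × Fin n) (Fin k × Fin n) ℂ} (hX : IsCPMat X) :
    IsCPMat (idTensor Φ k X) := by
  obtain ⟨T, y, hy, hJ⟩ := hΦ
  obtain ⟨S, x, hx, hX⟩ := hX
  refine .of_fintype (fun (st : Fin S × Fin T) ap => ∑ i, x st.1 (ap.1, i) * y st.2 (i, ap.2))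
    (fun st ap => Finset.sum_nonneg fun i _ => mul_nonneg (hx _ _) (hy _ _)) ?_
  rintro ⟨a, p⟩ ⟨b, q⟩
  have hgram := sum_sum_gram_mul_gram (fun s i => x s (a, i)) (fun s j => x s (b, j))
    (fun t i => y t (i, p)) (fun t j => y t (j, q))
  simp only [idTensor, of_apply, apply_eq_sum_choi, hX, hJ]
  exact_mod_cast hgram

/-- A linear map `Φ : Mₙ(ℂ) → Mₘ(ℂ)` is CPCP if and only if its Choi matrix
is completely positive. -/
theorem stmt10 (n m : ℕ)
    (Φ : Matrix (Fin n) (Fin n) ℂ →ₗ[ℂ] Matrix (Fin m) (Fin m) ℂ) :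
    IsCPCP Φ ↔ IsCPMat (choi Φ) := by
  refine ⟨fun hΦ => ?_, fun hΦ k X hX => isCPMat_idTensor_of_isCPMat_choi hΦ hX⟩
  rw [choi_eq_idTensor]
  exact hΦ n _ (isCPMat_rankOne _ diagIndicator_nonneg)
end

section
/- Let Φ : M_n(ℂ) → M_2(ℂ) be a trace-preserving linear map whose Choi matrix J(Φ) = Σ_{i,j=1}^n E_{ij} ⊗ Φ(E_{ij}) is doubly nonnegative (positive semidefinite with all entries real and nonnegative). Then J(Φ) is completely positive, i.e., J(Φ) = Σ_{t=1}^s x_t x_tᵀ for some entrywise nonnegative vectors x_t ∈ ℝ^{2n}. -/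
open Matrix
open scoped ComplexOrder

/-!
Trace preservation gives `tr Φ(E_ij) = 0` for `i ≠ j`, so, the entries being nonnegative, the
Choi matrix `J` vanishes at `((i,p),(j,p))` whenever `i ≠ j`: the graph of `J` is bipartite with
respect to the output index `p`. Conjugating by the signature matrix `diag(±1)` shows that the
comparison matrix `2 diag(J) - J` is positive semidefinite. A positive semidefinite Z-matrix `M`
admits a positive vector `w` with `M w ≥ 0` (a nonnegative eigenvector for the least eigenvalue
exists, and one inducts on its zero set), so `diag(w) J diag(w)` is diagonally dominant. A
nonnegative symmetric diagonally dominant matrix is a nonnegative combination of the rank-one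
matrices `(e_a + e_b)(e_a + e_b)ᵀ` and `e_a e_aᵀ`.
-/

open Finset

namespace Matrix

variable {ι : Type*} [Fintype ι]

lemma IsHermitian.posSemidef_sub_smul_one [DecidableEq ι] {M : Matrix ι ι ℝ}
    (hM : M.IsHermitian) {c : ℝ} (hc : ∀ i, c ≤ hM.eigenvalues i) : (M - c • 1).PosSemidef := by
  rw [posSemidef_iff_isHermitian_and_spectrum_nonneg]
  refine ⟨hM.sub (by simp [IsHermitian]), ?_⟩
  have : M - c • 1 = -(algebraMap ℝ (Matrix ι ι ℝ) c - M) := by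
    rw [Algebra.algebraMap_eq_smul_one]
    abel
  rw [this, ← spectrum.neg_eq, ← spectrum.singleton_sub_eq, hM.spectrum_real_eq_range_eigenvalues]
  rintro x ⟨_, rfl, _, ⟨i, rfl⟩, hx⟩
  have := hc i
  simp only [Set.mem_ofPred_eq] at hx ⊢
  linarith

lemma dotProduct_mulVec_abs_le {N : Matrix ι ι ℝ} (hN : ∀ i j, i ≠ j → N i j ≤ 0)
    (v : ι → ℝ) : |v| ⬝ᵥ N *ᵥ |v| ≤ v ⬝ᵥ N *ᵥ v := by
  simp only [dot_mulVec_eq_sum_sum]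
  refine sum_le_sum fun j _ => sum_le_sum fun i _ => ?_
  simp only [Pi.abs_apply]
  rcases eq_or_ne i j with rfl | hij
  · rw [mul_right_comm, abs_mul_abs_self, mul_right_comm]
  · nlinarith [hN i j hij, le_abs_self (v i * v j), abs_mul (v i) (v j)]

lemma PosSemidef.exists_nonneg_eigenvector_of_offDiag_nonpos [Nonempty ι] {M : Matrix ι ι ℝ}
    (hM : M.PosSemidef) (hZ : ∀ i j, i ≠ j → M i j ≤ 0) :
    ∃ (c : ℝ) (u : ι → ℝ), 0 ≤ c ∧ 0 ≤ u ∧ u ≠ 0 ∧ M *ᵥ u = c • u := by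
  classical
  obtain ⟨i₀, -, hmin⟩ := exists_min_image univ hM.1.eigenvalues univ_nonempty
  set c := hM.1.eigenvalues i₀
  set v : ι → ℝ := (hM.1.eigenvectorBasis i₀).ofLp
  have hN : (M - c • 1).PosSemidef :=
    hM.1.posSemidef_sub_smul_one fun i => hmin i (mem_univ i)
  have hNZ : ∀ i j, i ≠ j → (M - c • 1) i j ≤ 0 := fun i j hij => by
    simpa [one_apply_ne hij] using hZ i j hij
  have hv : (M - c • 1) *ᵥ v = 0 := by
    rw [sub_mulVec, smul_mulVec, one_mulVec, hM.1.mulVec_eigenvectorBasis, sub_self]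
  -- The quadratic form of `M - c • 1` is nonnegative, vanishes at `v`, and does not increase
  -- when `v` is replaced by `|v|`; so `|v|` lies in its kernel.
  have habs : (M - c • 1) *ᵥ |v| = 0 := by
    refine (hN.dotProduct_mulVec_zero_iff _).1 (le_antisymm ?_ (hN.dotProduct_mulVec_nonneg _))
    simpa [hv] using dotProduct_mulVec_abs_le hNZ v
  refine ⟨c, |v|, hM.eigenvalues_nonneg i₀, abs_nonneg v, ?_, ?_⟩
  · simpa [v] using hM.1.eigenvectorBasis.orthonormal.ne_zero i₀
  · rwa [sub_mulVec, smul_mulVec, one_mulVec, sub_eq_zero] at habs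

lemma apply_eq_zero_of_mulVec_apply_eq_zero {M : Matrix ι ι ℝ}
    (hZ : ∀ i j, i ≠ j → M i j ≤ 0) {u : ι → ℝ} (hu : 0 ≤ u) {i j : ι}
    (hi : u i = 0) (hMu : (M *ᵥ u) i = 0) (hj : u j ≠ 0) : M i j = 0 := by
  have hterms : ∀ k ∈ univ, M i k * u k ≤ 0 := fun k _ => by
    rcases eq_or_ne i k with rfl | hik
    · simp [hi]
    · exact mul_nonpos_of_nonpos_of_nonneg (hZ i k hik) (hu k)
  have := (sum_eq_zero_iff_of_nonpos hterms).1 hMu j (mem_univ j)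
  exact (mul_eq_zero.1 this).resolve_right hj

theorem PosSemidef.exists_pos_mulVec_nonneg_of_offDiag_nonpos_s15 {M : Matrix ι ι ℝ}
    (hM : M.PosSemidef) (hZ : ∀ i j, i ≠ j → M i j ≤ 0) :
    ∃ w : ι → ℝ, (∀ i, 0 < w i) ∧ 0 ≤ M *ᵥ w := by
  classical
  induction h : Fintype.card ι using Nat.strong_induction_on generalizing ι with
  | _ N ih =>
    rcases isEmpty_or_nonempty ι with hι | hι
    · exact ⟨0, isEmptyElim, isEmptyElim⟩
    obtain ⟨c, u, hc, hu, hu0, hMu⟩ := hM.exists_nonneg_eigenvector_of_offDiag_nonpos hZ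
    obtain ⟨i₀, hi₀⟩ := Function.ne_iff.1 hu0
    let Z := {i // u i = 0}
    have hcard : Fintype.card Z < N := h ▸ Fintype.card_subtype_lt (p := fun i => u i = 0) hi₀
    obtain ⟨w', hw'pos, hw'⟩ := ih _ hcard (hM.submatrix Subtype.val)
      (fun i j hij => hZ _ _ (Subtype.val_injective.ne hij)) rfl
    -- The weight vector is `u` on its support and `w'` on the zero set `Z` of `u`.
    let e : ι → ℝ := fun i => if h : u i = 0 then w' ⟨i, h⟩ else 0
    have he : ∀ i, (M *ᵥ e) i = ∑ z : Z, M i z * w' z := by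
      intro i
      rw [mulVec, dotProduct, ← Fintype.sum_subtype_add_sum_subtype (fun j => u j = 0)]
      have hin : ∀ z : Z, e z = w' z := fun z => dif_pos z.2
      have hout : ∀ z : {j // ¬u j = 0}, e z = 0 := fun z => dif_neg z.2
      simp only [hin, hout, mul_zero, sum_const_zero, add_zero]
      rfl
    refine ⟨u + e, fun i => ?_, fun i => ?_⟩
    · by_cases hi : u i = 0
      · simpa [e, hi] using hw'pos ⟨i, hi⟩
      · simpa [e, hi] using (hu i).lt_of_ne' hi
    · rw [mulVec_add, hMu, Pi.add_apply, he]
      by_cases hi : u i = 0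
      · simp only [Pi.smul_apply, hi, smul_zero, zero_add]
        exact hw' ⟨i, hi⟩
      · have hMz : ∀ z : Z, M i z = 0 := fun z => by
          rw [← hM.1.apply, apply_eq_zero_of_mulVec_apply_eq_zero hZ hu z.2
            (by simp [hMu, z.2]) hi, star_zero]
        simpa [hMz] using mul_nonneg hc (hu i)

lemma PosSemidef.two_smul_diagonal_diag_sub [DecidableEq ι] {R : Matrix ι ι ℝ}
    (hR : R.PosSemidef) (P : ι → Prop) [DecidablePred P]
    (hP : ∀ i j, i ≠ j → (P i ↔ P j) → R i j = 0) :
    ((2 : ℝ) • diagonal R.diag - R).PosSemidef := by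
  let s : ι → ℝ := fun i => if P i then 1 else -1
  convert hR.mul_mul_conjTranspose_same (diagonal s) using 1
  ext i j
  rw [diagonal_conjTranspose, star_trivial, mul_diagonal, diagonal_mul]
  simp only [sub_apply, smul_apply, diagonal_apply, diag_apply, smul_eq_mul, s]
  rcases eq_or_ne i j with rfl | hij
  · simp only [if_true]
    split_ifs <;> ring
  · by_cases hPij : P i ↔ P j
    · simp [hij, hP i j hij hPij]
    · split_ifs <;> simp_all

lemma PosSemidef.of_map_ofReal {R : Matrix ι ι ℝ}
    (h : (R.map (↑) : Matrix ι ι ℂ).PosSemidef) : R.PosSemidef := by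
  refine .of_dotProduct_mulVec_nonneg (IsHermitian.ext fun i j => ?_) fun x => ?_
  · simpa using congrArg Complex.re (h.1.apply i j)
  · have hx : star (fun i => (x i : ℂ)) ⬝ᵥ R.map (↑) *ᵥ (fun i => (x i : ℂ))
        = ((x ⬝ᵥ R *ᵥ x : ℝ) : ℂ) := by
      simp [dotProduct, mulVec]
    simpa [hx] using h.dotProduct_mulVec_nonneg (fun i => (x i : ℂ))

end Matrix

section CompletelyPositive

variable {ι : Type*} [Fintype ι]

lemma isCPMat_of_eq_sum {κ : Type*} [Fintype κ] {A : Matrix ι ι ℂ}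
    (x : κ → ι → ℝ) (hx : ∀ t, 0 ≤ x t)
    (hA : ∀ i j, A i j = ((∑ t, x t i * x t j : ℝ) : ℂ)) : IsCPMat A :=
  ⟨Fintype.card κ, fun t => x ((Fintype.equivFin κ).symm t), fun t => hx _, fun i j => by
    rw [hA, (Fintype.equivFin κ).symm.sum_comp fun t => x t i * x t j]⟩

lemma IsDNNMat.exists_eq_map_ofReal {A : Matrix ι ι ℂ} (hA : IsDNNMat A) :
    ∃ R : Matrix ι ι ℝ, R.PosSemidef ∧ (∀ i j, 0 ≤ R i j) ∧ A = R.map (↑) := by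
  have hAR : A = (A.map Complex.re).map (↑) := by
    ext i j
    exact Complex.ext rfl (by simp [(hA.2 i j).2])
  exact ⟨A.map Complex.re, .of_map_ofReal (hAR ▸ hA.1), fun i j => (hA.2 i j).1, hAR⟩

variable [DecidableEq ι]

lemma IsCPMat.diagonal_mul_mul_diagonal {A : Matrix ι ι ℂ} (hA : IsCPMat A) {d : ι → ℝ}
    (hd : 0 ≤ d) :
    IsCPMat (diagonal (fun i => (d i : ℂ)) * A * diagonal (fun i => (d i : ℂ))) := by
  obtain ⟨s, x, hx, hAx⟩ := hA
  refine ⟨s, fun t i => d i * x t i, fun t i => mul_nonneg (hd i) (hx t i), fun i j => ?_⟩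
  simp only [mul_diagonal, diagonal_mul, hAx]
  push_cast
  rw [mul_sum, sum_mul]
  exact sum_congr rfl fun t _ => by ring

lemma isCPMat_map_ofReal_of_diagDominant {C : Matrix ι ι ℝ} (hC : C.IsSymm)
    (hnn : ∀ i j, 0 ≤ C i j) (hdom : ∀ i, ∑ j ∈ univ.erase i, C i j ≤ C i i) :
    IsCPMat (C.map (↑)) := by
  -- `C` is the sum of `(C a b / 2) (e_a + e_b) (e_a + e_b)ᵀ` over the ordered pairs `a ≠ b`
  -- and of a nonnegative diagonal matrix.
  let B : Matrix ι ι ℝ := fun a b => if a = b then 0 else C a b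
  have hB : ∀ a b, 0 ≤ B a b := fun a b => by unfold B; split_ifs <;> simp [hnn]
  have hBsymm : ∀ a b, B a b = B b a := fun a b => by simp only [B, eq_comm (a := a), hC.apply]
  have hrow : ∀ a, ∑ b, B a b = ∑ b ∈ univ.erase a, C a b := fun a => by
    rw [← sum_erase_add _ _ (mem_univ a)]
    simp only [B, if_pos rfl, add_zero]
    exact sum_congr rfl fun b hb => if_neg (ne_of_mem_erase hb).symm
  let x : (ι × ι) ⊕ ι → ι → ℝ := Sum.elim
    (fun p => √(B p.1 p.2 / 2) • (Pi.single p.1 1 + Pi.single p.2 1))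
    (fun a => √(C a a - ∑ b, B a b) • Pi.single a 1)
  have hx : ∀ t, 0 ≤ x t := by
    have h1 : ∀ a : ι, (0 : ι → ℝ) ≤ Pi.single a 1 :=
      fun _ => Pi.single_nonneg.2 zero_le_one
    rintro (p | a)
    · exact smul_nonneg (Real.sqrt_nonneg _) (add_nonneg (h1 _) (h1 _))
    · exact smul_nonneg (Real.sqrt_nonneg _) (h1 _)
  refine isCPMat_of_eq_sum x hx fun c d => ?_
  have hpair : ∀ a b, x (.inl (a, b)) c * x (.inl (a, b)) d =
      B a b / 2 * ((if c = a then 1 else 0) + (if c = b then 1 else 0)) *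
        ((if d = a then 1 else 0) + (if d = b then 1 else 0)) := fun a b => by
    simp only [x, Sum.elim_inl, Pi.smul_apply, Pi.add_apply, smul_eq_mul, Pi.single_apply]
    rw [mul_mul_mul_comm, Real.mul_self_sqrt (div_nonneg (hB a b) zero_le_two), mul_assoc]
  have hdiag : ∀ a, x (.inr a) c * x (.inr a) d =
      (C a a - ∑ b, B a b) * ((if c = a then 1 else 0) * (if d = a then 1 else 0)) := fun a => by
    simp only [x, Sum.elim_inr, Pi.smul_apply, smul_eq_mul, Pi.single_apply]
    rw [mul_mul_mul_comm, Real.mul_self_sqrt (sub_nonneg.2 ((hrow a).trans_le (hdom a)))]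
  rw [Fintype.sum_sum_type, Fintype.sum_prod_type]
  simp only [hpair, hdiag, mul_add, mul_ite, mul_one, mul_zero, sum_add_distrib, sum_ite_eq,
    mem_univ, if_true, sum_ite_irrel, sum_const_zero]
  rw [map_apply, Complex.ofReal_inj]
  rcases eq_or_ne c d with rfl | hcd
  · have hBcc : B c c = 0 := if_pos rfl
    simp only [if_true, ← sum_div, hBsymm _ c, hBcc]
    ring
  · simp only [if_neg hcd, B, if_neg hcd.symm, hC.apply]
    ring

lemma isCPMat_map_ofReal_of_weighted_diagDominant {R : Matrix ι ι ℝ} (hR : R.IsSymm)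
    (hnn : ∀ i j, 0 ≤ R i j) {w : ι → ℝ} (hw : ∀ i, 0 < w i)
    (hdom : ∀ i, ∑ j ∈ univ.erase i, R i j * w j ≤ R i i * w i) :
    IsCPMat (R.map (↑)) := by
  let C : Matrix ι ι ℝ := diagonal w * R * diagonal w
  have hCapp : ∀ i j, C i j = w i * R i j * w j := fun i j => by
    simp only [C, mul_diagonal, diagonal_mul]
  have hC : IsCPMat (C.map (↑)) := by
    refine isCPMat_map_ofReal_of_diagDominant ?_ (fun i j => ?_) fun i => ?_
    · exact IsSymm.ext fun i j => by simp only [hCapp, hR.apply]; ring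
    · rw [hCapp]
      exact mul_nonneg (mul_nonneg (hw i).le (hnn i j)) (hw j).le
    · simp only [hCapp, mul_assoc, ← mul_sum]
      exact mul_le_mul_of_nonneg_left (hdom i) (hw i).le
  convert hC.diagonal_mul_mul_diagonal (d := w⁻¹) (fun i => (inv_pos.2 (hw i)).le) using 1
  ext i j
  simp only [map_apply, mul_diagonal, diagonal_mul, hCapp, Pi.inv_apply]
  push_cast
  field_simp [(hw i).ne', (hw j).ne']

theorem isCPMat_map_ofReal_of_bipartite {R : Matrix ι ι ℝ} (hR : R.PosSemidef)
    (hnn : ∀ i j, 0 ≤ R i j) (P : ι → Prop) [DecidablePred P]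
    (hP : ∀ i j, i ≠ j → (P i ↔ P j) → R i j = 0) : IsCPMat (R.map (↑)) := by
  set M := (2 : ℝ) • diagonal R.diag - R
  obtain ⟨w, hw, hMw⟩ :=
    (hR.two_smul_diagonal_diag_sub P hP).exists_pos_mulVec_nonneg_of_offDiag_nonpos_s15
      fun i j hij => by simpa [M, diagonal_apply_ne _ hij] using hnn i j
  refine isCPMat_map_ofReal_of_weighted_diagDominant (isHermitian_iff_isSymm.1 hR.1) hnn hw
    fun i => ?_
  have hoff : ∀ j ∈ univ.erase i, M i j * w j = -(R i j * w j) :=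
    fun j hj => by simp [M, diagonal_apply_ne _ (ne_of_mem_erase hj).symm]
  have := hMw i
  rw [Pi.zero_apply, mulVec, dotProduct, ← add_sum_erase _ _ (mem_univ i), sum_congr rfl hoff,
    sum_neg_distrib] at this
  simp only [Matrix.sub_apply, Matrix.smul_apply, diagonal_apply_eq, diag_apply,
    smul_eq_mul] at this
  linarith

end CompletelyPositive

lemma choi_apply_eq_zero_of_isTP {n m : ℕ}
    {Φ : Matrix (Fin n) (Fin n) ℂ →ₗ[ℂ] Matrix (Fin m) (Fin m) ℂ} (hΦ : IsTP Φ)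
    (hnn : ∀ a b, 0 ≤ choi Φ a b) {i j : Fin n} (hij : i ≠ j) (p : Fin m) :
    choi Φ (i, p) (j, p) = 0 := by
  have htr : ∑ q, choi Φ (i, q) (j, q) = 0 := by
    have := hΦ (single i j 1)
    rw [trace_single_eq_of_ne _ _ _ hij] at this
    simpa [choi, trace] using this
  exact (sum_eq_zero_iff_of_nonneg fun q _ => hnn _ _).1 htr p (mem_univ p)

/-- If `Φ : Mₙ(ℂ) → M₂(ℂ)` is trace-preserving and its Choi matrix is doubly
nonnegative, then its Choi matrix is completely positive. -/
theorem stmt15 (n : ℕ)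
    (Φ : Matrix (Fin n) (Fin n) ℂ →ₗ[ℂ] Matrix (Fin 2) (Fin 2) ℂ)
    (hTP : IsTP Φ) (hDNN : IsDNNMat (choi Φ)) :
    IsCPMat (choi Φ) := by
  obtain ⟨R, hR, hRnn, hJ⟩ := hDNN.exists_eq_map_ofReal
  have hblock : ∀ {i j : Fin n}, i ≠ j → ∀ p, R (i, p) (j, p) = 0 := fun hij p => by
    have hnn : ∀ a b, 0 ≤ choi Φ a b := fun a b => hJ ▸ Complex.zero_le_real.2 (hRnn a b)
    have := choi_apply_eq_zero_of_isTP hTP hnn hij p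
    rwa [hJ, map_apply, Complex.ofReal_eq_zero] at this
  rw [hJ]
  refine isCPMat_map_ofReal_of_bipartite hR hRnn (fun a => a.2 = 0) ?_
  rintro ⟨i, p⟩ ⟨j, q⟩ hne hpq
  obtain rfl : p = q := by fin_cases p <;> fin_cases q <;> simp_all
  exact hblock (fun hij => hne (by rw [hij])) p
end
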